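/- Under the iterated Cauchy–Schwarz bound above: if R is even, q > R, n ≥ 1 is chosen so that R + 2^n (q - R) ≥ M with ∫_{R^d} |C(x)|^M dx < ∞, then ṽ_{q,t}/v_{R,t} ≤ (Vol(D) ∫_{R^d} |C(x)|^M dx)^{1/2^n} · v_{R,t}^{-1/2^n}, uniformly in q > R. In particular, if v_{R,t} → ∞ as t → ∞, then sup_{q > R} Var(Y_{q,t})/ (q! / R! · Var(Y_{R,t})) → 0 in the sense that ṽ_{q,t}/v_{R,t} → 0 uniformly in q. -/

import Mathlib

open MeasureTheory Filter
open scoped ENNReal Topology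

/-!
The moments `a ↦ ∫ |C|^a g_D(·/t)` over the ball of radius `diam D · t` are log-convex by
Hölder's inequality, which does the `n` Cauchy–Schwarz steps at once. Writing
`q = (1 - 2⁻ⁿ) R + 2⁻ⁿ (R + 2ⁿ (q - R))` gives `ṽ_q ≤ ṽ_R^{1 - 2⁻ⁿ} ṽ_{R + 2ⁿ(q-R)}^{2⁻ⁿ}`;
since `R + 2ⁿ (q - R) ≥ M`, `|C| ≤ 1` and `g_D ≤ Vol(D)`, the last factor is at most
`Vol(D) ∫ |C|^M`, and `ṽ_R = v_R` because `R` is even.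
-/

section WeightedMoment

variable {α : Type*} [MeasurableSpace α]

noncomputable def weightedMoment (μ : Measure α) (u w : α → ℝ≥0∞) (a : ℝ) : ℝ≥0∞ :=
  ∫⁻ x, u x ^ a * w x ∂μ

variable {μ ν : Measure α} {u w : α → ℝ≥0∞}

theorem weightedMoment_convexComb_le (hu : AEMeasurable u μ) (hw : AEMeasurable w μ)
    {a b θ : ℝ} (ha : 0 ≤ a) (hb : 0 ≤ b) (hθ0 : 0 ≤ θ) (hθ1 : θ ≤ 1) :
    weightedMoment μ u w ((1 - θ) * a + θ * b) ≤
      weightedMoment μ u w a ^ (1 - θ) * weightedMoment μ u w b ^ θ := by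
  have hθ1' : 0 ≤ 1 - θ := sub_nonneg.2 hθ1
  calc weightedMoment μ u w ((1 - θ) * a + θ * b)
      = ∫⁻ x, (u x ^ a * w x) ^ (1 - θ) * (u x ^ b * w x) ^ θ ∂μ := by
        refine lintegral_congr fun x => ?_
        rw [ENNReal.mul_rpow_of_nonneg _ _ hθ1', ENNReal.mul_rpow_of_nonneg _ _ hθ0,
          ← ENNReal.rpow_mul, ← ENNReal.rpow_mul, mul_mul_mul_comm,
          ← ENNReal.rpow_add_of_nonneg _ _ (by positivity) (by positivity),
          ← ENNReal.rpow_add_of_nonneg _ _ hθ1' hθ0, sub_add_cancel, ENNReal.rpow_one,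
          mul_comm a, mul_comm b]
    _ ≤ _ := ENNReal.lintegral_mul_norm_pow_le ((hu.pow_const a).mul hw)
        ((hu.pow_const b).mul hw) hθ1' hθ0 (sub_add_cancel 1 θ)

theorem weightedMoment_le_of_le (hμν : μ ≤ ν) (hu : Measurable u) (hu1 : ∀ x, u x ≤ 1)
    {K : ℝ≥0∞} (hwK : ∀ x, w x ≤ K) {a m : ℝ} (hma : m ≤ a) :
    weightedMoment μ u w a ≤ K * ∫⁻ x, u x ^ m ∂ν :=
  calc weightedMoment μ u w a ≤ ∫⁻ x, u x ^ m * K ∂μ :=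
        lintegral_mono fun x => mul_le_mul' (ENNReal.rpow_le_rpow_of_exponent_ge (hu1 x) hma) (hwK x)
    _ = K * ∫⁻ x, u x ^ m ∂μ := by rw [lintegral_mul_const _ (hu.pow_const m), mul_comm]
    _ ≤ K * ∫⁻ x, u x ^ m ∂ν := by gcongr

theorem weightedMoment_ne_top [IsFiniteMeasure μ] (hu : Measurable u) (hu1 : ∀ x, u x ≤ 1)
    {K : ℝ≥0∞} (hK : K ≠ ∞) (hwK : ∀ x, w x ≤ K) {a : ℝ} (ha : 0 ≤ a) :
    weightedMoment μ u w a ≠ ∞ := by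
  refine ne_top_of_le_ne_top ?_ (weightedMoment_le_of_le le_rfl hu hu1 hwK ha)
  simpa using ENNReal.mul_ne_top hK (measure_ne_top μ Set.univ)

theorem weightedMoment_le_of_lt (hμν : μ ≤ ν) (hu : Measurable u) (hu1 : ∀ x, u x ≤ 1)
    (hw : Measurable w) {K : ℝ≥0∞} (hwK : ∀ x, w x ≤ K) {m R q : ℕ} (n : ℕ) (hRq : R < q)
    (hmn : m ≤ R + 2 ^ n) :
    weightedMoment μ u w q ≤
      weightedMoment μ u w R ^ (1 - (1 : ℝ) / 2 ^ n) *
        (K * ∫⁻ x, u x ^ (m : ℝ) ∂ν) ^ ((1 : ℝ) / 2 ^ n) := by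
  have hRq' : (R : ℝ) + 1 ≤ q := by exact_mod_cast hRq
  have h2n : (0 : ℝ) < 2 ^ n := by positivity
  have hθ1 : (1 : ℝ) / 2 ^ n ≤ 1 := (div_le_one h2n).2 (one_le_pow₀ one_le_two)
  have hq : (q : ℝ) = (1 - 1 / 2 ^ n) * R + 1 / 2 ^ n * (R + 2 ^ n * (q - R)) := by
    field_simp; ring
  have hm : (m : ℝ) ≤ R + 2 ^ n * (q - R) := by
    have : (m : ℝ) ≤ R + 2 ^ n := by exact_mod_cast hmn
    nlinarith
  rw [hq]
  refine (weightedMoment_convexComb_le hu.aemeasurable hw.aemeasurable (Nat.cast_nonneg R)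
    (by nlinarith) (by positivity) hθ1).trans ?_
  gcongr
  exact weightedMoment_le_of_le hμν hu hu1 hwK hm

end WeightedMoment

section RealMoments

variable {α : Type*} [MeasurableSpace α] {μ ν : Measure α} {c w : α → ℝ}

theorem integral_abs_pow_mul_eq_toReal_weightedMoment (hc : Measurable c) (hw : Measurable w)
    (hw0 : ∀ x, 0 ≤ w x) (p : ℕ) :
    ∫ x, |c x| ^ p * w x ∂μ =
      (weightedMoment μ (fun x => ENNReal.ofReal |c x|) (fun x => ENNReal.ofReal (w x)) p).toReal := by
  rw [integral_eq_lintegral_of_nonneg_ae (ae_of_all _ fun x => mul_nonneg (by positivity) (hw0 x))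
    (by fun_prop : Measurable fun x => |c x| ^ p * w x).aestronglyMeasurable, weightedMoment]
  congr 1
  refine lintegral_congr fun x => ?_
  rw [ENNReal.ofReal_mul (by positivity), ENNReal.ofReal_pow (abs_nonneg _), ENNReal.rpow_natCast]

theorem integral_abs_pow_mul_le_of_lt [IsFiniteMeasure μ] (hμν : μ ≤ ν) (hc : Measurable c)
    (hc1 : ∀ x, |c x| ≤ 1) (hw : Measurable w) (hw0 : ∀ x, 0 ≤ w x) {K : ℝ} (hK : 0 ≤ K)
    (hwK : ∀ x, w x ≤ K) {m R q : ℕ} (n : ℕ) (hcm : Integrable (fun x => |c x| ^ m) ν)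
    (hRq : R < q) (hmn : m ≤ R + 2 ^ n) :
    ∫ x, |c x| ^ q * w x ∂μ ≤
      (∫ x, |c x| ^ R * w x ∂μ) ^ (1 - (1 : ℝ) / 2 ^ n) *
        (K * ∫ x, |c x| ^ m ∂ν) ^ ((1 : ℝ) / 2 ^ n) := by
  set u : α → ℝ≥0∞ := fun x => ENNReal.ofReal |c x|
  have hu : Measurable u := ENNReal.measurable_ofReal.comp hc.abs
  have hu1 : ∀ x, u x ≤ 1 := fun x => ENNReal.ofReal_le_one.2 (hc1 x)
  have hwK' : ∀ x, ENNReal.ofReal (w x) ≤ ENNReal.ofReal K := fun x => ENNReal.ofReal_le_ofReal (hwK x)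
  have hm : ∫ x, |c x| ^ m ∂ν = (∫⁻ x, u x ^ (m : ℝ) ∂ν).toReal := by
    simpa [weightedMoment] using integral_abs_pow_mul_eq_toReal_weightedMoment (μ := ν) hc
      measurable_const (fun _ => zero_le_one) m
  have hmoment_top : (∫⁻ x, u x ^ (m : ℝ) ∂ν) ≠ ∞ := by
    convert hcm.lintegral_lt_top.ne using 3 with x
    rw [ENNReal.ofReal_pow (abs_nonneg _), ENNReal.rpow_natCast]
  rw [integral_abs_pow_mul_eq_toReal_weightedMoment hc hw hw0,
    integral_abs_pow_mul_eq_toReal_weightedMoment hc hw hw0, hm, ← ENNReal.toReal_ofReal hK,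
    ← ENNReal.toReal_mul, ENNReal.toReal_rpow, ENNReal.toReal_rpow, ← ENNReal.toReal_mul]
  have hθ : 0 ≤ 1 - (1 : ℝ) / 2 ^ n :=
    sub_nonneg.2 ((div_le_one (by positivity)).2 (one_le_pow₀ one_le_two))
  refine ENNReal.toReal_mono ?_
    (weightedMoment_le_of_lt hμν hu hu1 (ENNReal.measurable_ofReal.comp hw) hwK' n hRq hmn)
  exact ENNReal.mul_ne_top
    (ENNReal.rpow_ne_top_of_nonneg hθ
      (weightedMoment_ne_top hu hu1 ENNReal.ofReal_ne_top hwK' (Nat.cast_nonneg R)))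
    (ENNReal.rpow_ne_top_of_nonneg (by positivity)
      (ENNReal.mul_ne_top ENNReal.ofReal_ne_top hmoment_top))

end RealMoments

theorem measurable_measure_inter_image_add_left {G : Type*} [MeasurableSpace G] [AddGroup G]
    [MeasurableAdd₂ G] [MeasurableNeg G] (μ : Measure G) [SFinite μ] {s : Set G}
    (hs : MeasurableSet s) : Measurable fun x => μ (s ∩ (fun y => x + y) '' s) := by
  have hprod : MeasurableSet {p : G × G | p.2 ∈ s ∧ -p.1 + p.2 ∈ s} :=
    (measurable_snd hs).inter ((measurable_fst.neg.add measurable_snd) hs)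
  simp_rw [Set.image_add_left]
  exact measurable_measure_prodMk_left hprod

theorem div_le_rpow_mul_rpow_neg {x v A ε : ℝ} (hv : 0 < v) (h : x ≤ v ^ (1 - ε) * A ^ ε) :
    x / v ≤ A ^ ε * v ^ (-ε) := by
  rw [div_le_iff₀ hv, mul_assoc, ← Real.rpow_add_one hv.ne', neg_add_eq_sub, mul_comm]
  exact h

theorem measure_setOf_norm_le_ne_top {E : Type*} [NormedAddCommGroup E] [MeasurableSpace E]
    [ProperSpace E] (μ : Measure E) [IsFiniteMeasureOnCompacts μ] (r : ℝ) :
    μ {z : E | ‖z‖ ≤ r} ≠ ∞ := by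
  have hball : {z : E | ‖z‖ ≤ r} = Metric.closedBall 0 r := by
    ext; exact mem_closedBall_zero_iff.symm
  exact hball ▸ measure_closedBall_lt_top.ne

theorem exists_forall_lt_of_le_mul_rpow_neg {ι : Type*} {P : ι → Prop} {f : ι → ℝ → ℝ}
    {v : ℝ → ℝ} {c ε : ℝ} (hε : 0 < ε) (hf : ∀ t > (0 : ℝ), ∀ i, P i → f i t ≤ c * v t ^ (-ε))
    (hv : Tendsto v atTop atTop) : ∀ δ > (0 : ℝ), ∃ T : ℝ, ∀ t ≥ T, ∀ i, P i → f i t < δ := by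
  intro δ hδ
  have hbound : Tendsto (fun t => c * v t ^ (-ε)) atTop (𝓝 0) := by
    simpa only [mul_zero, Function.comp_def] using
      ((tendsto_rpow_neg_atTop hε).comp hv).const_mul c
  obtain ⟨T, hT⟩ := eventually_atTop.1 (hbound.eventually (gt_mem_nhds hδ))
  exact ⟨max T 1, fun t ht i hi => (hf t (by linarith [le_max_right T 1]) i hi).trans_lt
    (hT t (le_of_max_le_left ht))⟩

theorem stmt_10_general {d : ℕ}
    (C : EuclideanSpace ℝ (Fin d) → ℝ) (hCm : Measurable C) (hC1 : ∀ x, |C x| ≤ 1)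
    (D : Set (EuclideanSpace ℝ (Fin d))) (hD : IsCompact D)
    (R : ℕ) (hR : Even R)
    (M n : ℕ) (hnM : M ≤ R + 2 ^ n)
    (hCM : Integrable fun x => |C x| ^ M)
    (g : EuclideanSpace ℝ (Fin d) → ℝ)
    (hg : ∀ x, g x = (volume (D ∩ ((fun y => x + y) '' D))).toReal)
    (vt : ℕ → ℝ → ℝ)
    (hvt : ∀ p t, vt p t = ∫ z in {z : EuclideanSpace ℝ (Fin d) | ‖z‖ ≤ Metric.diam D * t},
      |C z| ^ p * g (t⁻¹ • z))
    (v : ℝ → ℝ)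
    (hv : ∀ t, v t = ∫ z in {z : EuclideanSpace ℝ (Fin d) | ‖z‖ ≤ Metric.diam D * t},
      C z ^ R * g (t⁻¹ • z))
    (hvpos : ∀ t > (0 : ℝ), 0 < v t) :
    (∀ t > (0 : ℝ), ∀ q, R < q →
      vt q t / v t ≤
        ((volume D).toReal * ∫ x, |C x| ^ M) ^ ((1 : ℝ) / 2 ^ n) *
          (v t) ^ (-(1 : ℝ) / 2 ^ n)) ∧
    (Tendsto v atTop atTop →
      ∀ ε > (0 : ℝ), ∃ T : ℝ, ∀ t ≥ T, ∀ q, R < q → vt q t / v t < ε) := by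
  have hgm : Measurable g := by
    simpa only [← funext hg] using
      (measurable_measure_inter_image_add_left volume hD.measurableSet).ennreal_toReal
  have hg_nonneg : ∀ x, 0 ≤ g x := fun x => hg x ▸ ENNReal.toReal_nonneg
  have hg_le : ∀ x, g x ≤ (volume D).toReal := fun x => by
    rw [hg]; exact ENNReal.toReal_mono hD.measure_lt_top.ne (measure_mono Set.inter_subset_left)
  have key : ∀ t > (0 : ℝ), ∀ q, R < q → vt q t / v t ≤
      ((volume D).toReal * ∫ x, |C x| ^ M) ^ ((1 : ℝ) / 2 ^ n) * (v t) ^ (-(1 : ℝ) / 2 ^ n) := by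
    intro t ht q hq
    have := isFiniteMeasure_restrict.2 <|
      measure_setOf_norm_le_ne_top (volume : Measure (EuclideanSpace ℝ (Fin d))) (Metric.diam D * t)
    have hvR : v t = vt R t := by simp only [hv, hvt, hR.pow_abs]
    rw [neg_div]
    refine div_le_rpow_mul_rpow_neg (hvpos t ht) ?_
    rw [hvR, hvt, hvt]
    exact integral_abs_pow_mul_le_of_lt Measure.restrict_le_self hCm hC1
      (hgm.comp (measurable_const_smul t⁻¹)) (fun _ => hg_nonneg _)
      ENNReal.toReal_nonneg (fun _ => hg_le _) n hCM hq hnM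
  refine ⟨key, fun hv_top => ?_⟩
  simp only [neg_div] at key
  exact exists_forall_lt_of_le_mul_rpow_neg (by positivity) key hv_top

/-- Iterated Cauchy–Schwarz bound: if `R` is even, `R + 2^n ≥ M` and `∫ |C|^M < ∞`, then
`ṽ_{q,t}/v_{R,t} ≤ (Vol(D) ∫ |C|^M)^{1/2^n} v_{R,t}^{-1/2^n}` uniformly in `q > R`;
consequently, if `v_{R,t} → ∞`, then `ṽ_{q,t}/v_{R,t} → 0` uniformly in `q > R`. -/
theorem stmt_10 {d : ℕ} (hd : 1 ≤ d)
    (C : EuclideanSpace ℝ (Fin d) → ℝ) (hCm : Measurable C) (hC1 : ∀ x, |C x| ≤ 1)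
    (D : Set (EuclideanSpace ℝ (Fin d))) (hD : IsCompact D) (hvol : 0 < volume D)
    (R : ℕ) (hR : Even R) (hR1 : 1 ≤ R)
    (M n : ℕ) (hn : 1 ≤ n) (hM : R + 1 ≤ M) (hnM : M ≤ R + 2 ^ n)
    (hCM : Integrable fun x => |C x| ^ M)
    (g : EuclideanSpace ℝ (Fin d) → ℝ)
    (hg : ∀ x, g x = (volume (D ∩ ((fun y => x + y) '' D))).toReal)
    (vt : ℕ → ℝ → ℝ)
    (hvt : ∀ p t, vt p t = ∫ z in {z : EuclideanSpace ℝ (Fin d) | ‖z‖ ≤ Metric.diam D * t},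
      |C z| ^ p * g (t⁻¹ • z))
    (v : ℝ → ℝ)
    (hv : ∀ t, v t = ∫ z in {z : EuclideanSpace ℝ (Fin d) | ‖z‖ ≤ Metric.diam D * t},
      C z ^ R * g (t⁻¹ • z))
    (hvpos : ∀ t > (0 : ℝ), 0 < v t) :
    (∀ t > (0 : ℝ), ∀ q, R < q →
      vt q t / v t ≤
        ((volume D).toReal * ∫ x, |C x| ^ M) ^ ((1 : ℝ) / 2 ^ n) *
          (v t) ^ (-(1 : ℝ) / 2 ^ n)) ∧
    (Tendsto v atTop atTop →
      ∀ ε > (0 : ℝ), ∃ T : ℝ, ∀ t ≥ T, ∀ q, R < q → vt q t / v t < ε) :=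
  stmt_10_general C hCm hC1 D hD R hR M n hnM hCM g hg vt hvt v hv hvpos
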